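/- For a fixed nonzero vector y ∈ ℝ^m, the function p ↦ ‖y‖_{ℓ^{p+2}}^{p+2} / ‖y‖_{ℓ^p}^p is nondecreasing on (0, ∞). -/

import Mathlib

/-!
Write `a i = |y i|` and `S r = ∑ i, a i ^ r`, so that `‖y‖_{ℓ^r}^r = S r`. The claim
`S (p + 2) * S q ≤ S (q + 2) * S p` is Chebyshev's sum inequality for the weights `a i ^ p`
and the sequences `a i ^ 2`, `a i ^ (q - p)`, which are similarly ordered because both are
nondecreasing functions of `a i`.
-/

open Finset

noncomputable def lpNorm {m : ℕ} (q : ℝ) (y : Fin m → ℝ) : ℝ :=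
  (∑ i, |y i| ^ q) ^ (1 / q)

/-- Weighted Chebyshev sum inequality. -/
theorem MonovaryOn.sum_mul_sum_le_sum_mul_sum {ι α : Type*} [CommRing α] [LinearOrder α]
    [IsStrictOrderedRing α] {s : Finset ι} {w f g : ι → α} (hw : ∀ i ∈ s, 0 ≤ w i)
    (hfg : MonovaryOn f g s) :
    (∑ i ∈ s, w i * f i) * ∑ i ∈ s, w i * g i ≤ (∑ i ∈ s, w i) * ∑ i ∈ s, w i * f i * g i := by
  have hdouble : ∑ i ∈ s, ∑ j ∈ s, w i * w j * ((f j - f i) * (g j - g i)) =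
      2 * ((∑ i ∈ s, w i) * ∑ i ∈ s, w i * f i * g i -
        (∑ i ∈ s, w i * f i) * ∑ i ∈ s, w i * g i) := by
    have hexpand : ∀ i j, w i * w j * ((f j - f i) * (g j - g i)) =
        w i * (w j * f j * g j) - w i * f i * (w j * g j) - w i * g i * (w j * f j) +
          w i * f i * g i * w j := fun i j => by ring
    simp only [hexpand, sum_add_distrib, sum_sub_distrib, ← sum_mul_sum]
    ring
  have hnonneg : 0 ≤ ∑ i ∈ s, ∑ j ∈ s, w i * w j * ((f j - f i) * (g j - g i)) :=
    sum_nonneg fun i hi => sum_nonneg fun j hj =>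
      mul_nonneg (mul_nonneg (hw i hi) (hw j hj)) (hfg.sub_mul_sub_nonneg hi hj)
  rw [hdouble] at hnonneg
  exact sub_nonneg.1 (nonneg_of_mul_nonneg_right hnonneg two_pos)

theorem Real.monovary_rpow_rpow {ι : Type*} {a : ι → ℝ} (ha : ∀ i, 0 ≤ a i) {s t : ℝ}
    (hs : 0 ≤ s) (ht : 0 ≤ t) : Monovary (fun i => a i ^ s) (fun i => a i ^ t) := by
  intro i j hij
  by_contra! hji
  have hlt : a j < a i := lt_of_not_ge fun h => (Real.rpow_le_rpow (ha i) h hs).not_gt hji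
  exact (Real.rpow_le_rpow (ha j) hlt.le ht).not_gt hij

theorem Real.sum_rpow_add_mul_sum_rpow_le {ι : Type*} [Fintype ι] {a : ι → ℝ}
    (ha : ∀ i, 0 ≤ a i) {p q s : ℝ} (hp : 0 < p) (hs : 0 ≤ s) (hpq : p ≤ q) :
    (∑ i, a i ^ (p + s)) * ∑ i, a i ^ q ≤ (∑ i, a i ^ (q + s)) * ∑ i, a i ^ p := by
  have hq : 0 < q := hp.trans_le hpq
  have hchebyshev := ((Real.monovary_rpow_rpow ha hs (sub_nonneg.2 hpq)).monovaryOn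
    (univ : Finset ι)).sum_mul_sum_le_sum_mul_sum (w := fun i => a i ^ p)
    fun i _ => Real.rpow_nonneg (ha i) p
  have hmul : ∀ {u v : ℝ}, u + v ≠ 0 → ∀ i, a i ^ u * a i ^ v = a i ^ (u + v) :=
    fun huv i => (Real.rpow_add' (ha i) huv).symm
  simp only [hmul (by positivity : p + s ≠ 0), hmul (by linarith : p + (q - p) ≠ 0),
    hmul (by linarith : p + s + (q - p) ≠ 0), add_sub_cancel,
    show p + s + (q - p) = q + s by ring] at hchebyshev
  linarith

theorem lpNorm_rpow_self {m : ℕ} {r : ℝ} (hr : r ≠ 0) (y : Fin m → ℝ) :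
    lpNorm r y ^ r = ∑ i, |y i| ^ r := by
  rw [lpNorm, ← Real.rpow_mul (sum_nonneg fun i _ => by positivity), one_div,
    inv_mul_cancel₀ hr, Real.rpow_one]

theorem sum_abs_rpow_pos {m : ℕ} {y : Fin m → ℝ} (hy : y ≠ 0) (r : ℝ) :
    0 < ∑ i, |y i| ^ r := by
  obtain ⟨i, hi⟩ := Function.ne_iff.1 hy
  exact sum_pos' (fun j _ => by positivity) ⟨i, mem_univ i, Real.rpow_pos_of_pos (abs_pos.2 hi) r⟩

/-- For a fixed nonzero `y ∈ ℝ^m`, the map `p ↦ ‖y‖_{ℓ^{p+2}}^{p+2}/‖y‖_{ℓ^p}^p`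
is nondecreasing on `(0,∞)`. -/
theorem ratio_monotone {m : ℕ} (y : Fin m → ℝ) (hy : y ≠ 0)
    (p q : ℝ) (hp : 0 < p) (hpq : p ≤ q) :
    lpNorm (p + 2) y ^ (p + 2) / lpNorm p y ^ p ≤
      lpNorm (q + 2) y ^ (q + 2) / lpNorm q y ^ q := by
  have hq : 0 < q := hp.trans_le hpq
  rw [lpNorm_rpow_self (by positivity : p + 2 ≠ 0), lpNorm_rpow_self (by positivity : q + 2 ≠ 0),
    lpNorm_rpow_self hp.ne', lpNorm_rpow_self hq.ne',
    div_le_div_iff₀ (sum_abs_rpow_pos hy p) (sum_abs_rpow_pos hy q)]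
  exact Real.sum_rpow_add_mul_sum_rpow_le (fun i => abs_nonneg (y i)) hp zero_le_two hpq
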